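/- In the toy crossover environment with N = 1 and K > 0, the posterior after a comparison between c⁺ and c⁻ has strictly lower expected Shannon entropy than the posterior after a demonstration (free choice among all 2(K+1) options), for every β > 0. Specifically, with a uniform prior over {θ⁺, θ⁻}, the comparison posterior entropy is H₂(σ(2βR₁)) (entropy of a Bernoulli with parameter σ(2βR₁)), which is strictly less than the expected posterior entropy of the demonstration, which mixes H₂(σ(2βR₁)) (with probability of an extreme choice) and H₂(σ(2βR₂)) (with probability of a conservative choice), since R₁ > R₂ > 0 implies H₂(σ(2βR₁)) < H₂(σ(2βR₂)) and the conservative choice has positive probability. -/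

import Mathlib

open Real

/-- Logistic sigmoid. -/
noncomputable def sigm (x : ℝ) : ℝ := 1 / (1 + Real.exp (-x))

/-- Binary entropy. -/
noncomputable def H2 (p : ℝ) : ℝ := -p * Real.log p - (1 - p) * Real.log (1 - p)

/-!
The demonstration's expected posterior entropy is a convex combination of `H₂(σ(2βR₁))` and
`H₂(σ(2βR₂))` with a strictly positive weight on the second term. Since `σ` maps `[0, ∞)`
increasingly into `[1/2, 1)`, where binary entropy is strictly decreasing, `R₂ < R₁` gives
`H₂(σ(2βR₁)) < H₂(σ(2βR₂))`, so the combination strictly exceeds its first term.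
-/

lemma sigm_eq_sigmoid : sigm = Real.sigmoid := by
  funext x
  rw [sigm, Real.sigmoid_def, one_div]

lemma H2_eq_binEntropy : H2 = Real.binEntropy := by
  funext p
  simp only [H2, Real.binEntropy, Real.log_inv]
  ring

lemma sigmoid_mem_Icc_of_nonneg {x : ℝ} (hx : 0 ≤ x) : Real.sigmoid x ∈ Set.Icc (2⁻¹ : ℝ) 1 :=
  ⟨Real.sigmoid_zero ▸ Real.sigmoid_le hx, Real.sigmoid_le_one x⟩

lemma H2_sigm_strictAntiOn : StrictAntiOn (fun x ↦ H2 (sigm x)) (Set.Ici 0) := by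
  intro x hx y hy hxy
  simp only [sigm_eq_sigmoid, H2_eq_binEntropy]
  exact Real.binEntropy_strictAntiOn (sigmoid_mem_Icc_of_nonneg hx)
    (sigmoid_mem_Icc_of_nonneg hy) (Real.sigmoid_lt hxy)

lemma lt_div_mul_add_div_mul_of_lt {u v a b : ℝ} (huv : u < v) (ha : 0 < a) (hb : 0 < b) :
    u < a / (a + b) * u + b / (a + b) * v := by
  rw [div_mul_eq_mul_div, div_mul_eq_mul_div, ← add_div, lt_div_iff₀ (by positivity)]
  nlinarith

/-- Toy crossover environment with `N = 1` and `K ≥ 1`: two hypotheses `θ⁺, θ⁻` with uniform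
prior; extreme choices `c⁺, c⁻` with rewards `±R₁` and `2K` conservative choices with rewards
`±R₂`, where `R₁ > R₂ > 0`.  Under the Boltzmann model with `β > 0` (true hypothesis `θ⁺`,
and symmetrically for `θ⁻`), the comparison between `c⁺` and `c⁻` yields posterior entropy
`H₂(σ(2βR₁))`, which is strictly smaller than the expected posterior entropy of a
demonstration (a free Boltzmann choice among all `2(K+1)` options), which equals
`pExt · H₂(σ(2βR₁)) + pCons · H₂(σ(2βR₂))` where `pExt` (resp. `pCons`) is the probability of
making an extreme (resp. conservative) choice. -/
theorem stmt15 (K : ℕ) (hK : 1 ≤ K) (R1 R2 β : ℝ) (hR12 : R2 < R1) (hR2 : 0 < R2)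
    (hβ : 0 < β) :
    H2 (sigm (2 * β * R1)) <
      ((Real.exp (β * R1) + Real.exp (-(β * R1))) /
          (Real.exp (β * R1) + Real.exp (-(β * R1)) +
            K * (Real.exp (β * R2) + Real.exp (-(β * R2))))) * H2 (sigm (2 * β * R1)) +
        ((K * (Real.exp (β * R2) + Real.exp (-(β * R2)))) /
          (Real.exp (β * R1) + Real.exp (-(β * R1)) +
            K * (Real.exp (β * R2) + Real.exp (-(β * R2))))) * H2 (sigm (2 * β * R2)) := by
  have hR1 : 0 < R1 := hR2.trans hR12
  have hH : H2 (sigm (2 * β * R1)) < H2 (sigm (2 * β * R2)) :=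
    H2_sigm_strictAntiOn (Set.mem_Ici.2 (by positivity)) (Set.mem_Ici.2 (by positivity))
      (by gcongr)
  have hKpos : (0 : ℝ) < K := by exact_mod_cast hK
  exact lt_div_mul_add_div_mul_of_lt hH (by positivity) (by positivity)
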